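/- The output of the quadratic-growth transducer has size exactly quadratic in the input size: for every natural number n, 2 · size(G(n)) = n² + 5n + 2, where size counts the number of nodes of a tree; in particular size(G(n)) is not O(n), so this top-down tree transducer does not have linear growth. -/

import Mathlib

/-!
`G n` is a spine of `n` nodes `a` ending in `c`, whose branches `b^k(c)` for `k = 1, …, n` have
size `k + 1`; so `size (G n) = 1 + 2n + n(n+1)/2`. Since `n = o(n²)`, a function bounded below by
a multiple of `n²` cannot be `O(n)`.
-/

/-- Output trees over the ranked alphabet {a:2, b:1, c:0}. -/
inductive T : Type
  | a : T → T → T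
  | b : T → T
  | c : T

/-- The number of nodes of a tree. -/
def size : T → ℕ
  | T.c => 1
  | T.b t => 1 + size t
  | T.a t u => 1 + size t + size u

/-- `bpow k = b^k(c)`. -/
def bpow : ℕ → T
  | 0 => T.c
  | k + 1 => T.b (bpow k)

/-- `G n`, the output of the quadratic-growth transducer on input `S^n(0)`. -/
def G : ℕ → T
  | 0 => T.c
  | n + 1 => T.a (bpow (n + 1)) (G n)

open Asymptotics Filter

theorem not_isBigO_natCast_of_sq_isBigO {f : ℕ → ℝ}
    (h : (fun n : ℕ => (n : ℝ) ^ 2) =O[atTop] f) : ¬ f =O[atTop] (fun n : ℕ => (n : ℝ)) := by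
  have hlin : (fun n : ℕ => (n : ℝ)) =o[atTop] (fun n : ℕ => (n : ℝ) ^ 2) := by
    simpa only [pow_one, Function.comp_def] using
      (isLittleO_pow_pow_atTop_of_lt (𝕜 := ℝ) one_lt_two).comp_tendsto
        tendsto_natCast_atTop_atTop
  have hne : ∃ᶠ n : ℕ in atTop, (n : ℝ) ≠ 0 :=
    (eventually_ne_atTop 0).frequently.mono fun n hn => Nat.cast_ne_zero.mpr hn
  exact fun hf => hlin.not_isBigO hne (h.trans hf)

theorem size_bpow (k : ℕ) : size (bpow k) = k + 1 := by
  induction k with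
  | zero => rfl
  | succ k ih => rw [bpow, size, ih, add_comm]

theorem two_mul_size_G (n : ℕ) : 2 * size (G n) = n ^ 2 + 5 * n + 2 := by
  induction n with
  | zero => rfl
  | succ n ih =>
    rw [G, size, size_bpow]
    linear_combination ih

theorem sq_isBigO_size_G :
    (fun n : ℕ => (n : ℝ) ^ 2) =O[atTop] (fun n : ℕ => (size (G n) : ℝ)) :=
  isBigO_of_le' (c := 2) atTop fun n => by
    have hsq : n ^ 2 ≤ 2 * size (G n) := by rw [two_mul_size_G]; omega
    simp only [Real.norm_eq_abs, abs_pow, Nat.abs_cast]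
    exact_mod_cast hsq

/-- The output size is exactly quadratic: `2 · size (G n) = n² + 5n + 2`;
in particular `size (G n)` is not `O(n)`, so this top-down tree transducer
does not have linear growth. -/
theorem quadratic_growth :
    (∀ n : ℕ, 2 * size (G n) = n ^ 2 + 5 * n + 2) ∧
    ¬ (fun n : ℕ => (size (G n) : ℝ)) =O[Filter.atTop] (fun n : ℕ => (n : ℝ)) :=
  ⟨two_mul_size_G, not_isBigO_natCast_of_sq_isBigO sq_isBigO_size_G⟩
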